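/- arXiv:2511.11072 — 11 statements merged into one kernel-verified Lean document; each statement's English description precedes it below -/
import Mathlib

section
/- If σ is a finite nonempty word over 2^AP and φ is an LTL formula such that σ ⊨_B φ (σ is an informative model for φ under the bounded satisfaction relation), then for every infinite word σ' over 2^AP, the concatenation σ·σ' satisfies φ under the standard infinite-word LTL semantics. -/
/-! Common definitions: LTL / LTLf syntax and semantics -/

inductive LTLF (AP : Type) : Type where
  | tt : LTLF AP
  | ff : LTLF AP
  | atom : AP → LTLF AP
  | natom : AP → LTLF AP
  | conj : LTLF AP → LTLF AP → LTLF AP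
  | disj : LTLF AP → LTLF AP → LTLF AP
  | next : LTLF AP → LTLF AP
  | wnext : LTLF AP → LTLF AP
  | untl : LTLF AP → LTLF AP → LTLF AP
  | rel : LTLF AP → LTLF AP → LTLF AP
  | yest : LTLF AP → LTLF AP
  | wyest : LTLF AP → LTLF AP
  | since : LTLF AP → LTLF AP → LTLF AP
  | trig : LTLF AP → LTLF AP → LTLF AP

namespace LTLF

variable {AP : Type}

/-- `F ψ := ⊤ U ψ` -/
def F (ψ : LTLF AP) : LTLF AP := untl tt ψ
/-- `G ψ := ⊥ R ψ` -/
def G (ψ : LTLF AP) : LTLF AP := rel ff ψ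
/-- `O ψ := ⊤ S ψ` -/
def O (ψ : LTLF AP) : LTLF AP := since tt ψ

/-- negation normal form of the negation of a formula -/
def neg : LTLF AP → LTLF AP
  | tt => ff
  | ff => tt
  | atom p => natom p
  | natom p => atom p
  | conj a b => disj (neg a) (neg b)
  | disj a b => conj (neg a) (neg b)
  | next a => wnext (neg a)
  | wnext a => next (neg a)
  | untl a b => rel (neg a) (neg b)
  | rel a b => untl (neg a) (neg b)
  | yest a => wyest (neg a)
  | wyest a => yest (neg a)
  | since a b => trig (neg a) (neg b)
  | trig a b => since (neg a) (neg b)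

/-- pure past formulas: only past temporal modalities -/
def PurePast : LTLF AP → Prop
  | tt => True
  | ff => True
  | atom _ => True
  | natom _ => True
  | conj a b => PurePast a ∧ PurePast b
  | disj a b => PurePast a ∧ PurePast b
  | next _ => False
  | wnext _ => False
  | untl _ _ => False
  | rel _ _ => False
  | yest a => PurePast a
  | wyest a => PurePast a
  | since a b => PurePast a ∧ PurePast b
  | trig a b => PurePast a ∧ PurePast b

/-- pure future formulas: only future temporal modalities -/
def PureFuture : LTLF AP → Prop
  | tt => True
  | ff => True
  | atom _ => True
  | natom _ => True
  | conj a b => PureFuture a ∧ PureFuture b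
  | disj a b => PureFuture a ∧ PureFuture b
  | next a => PureFuture a
  | wnext a => PureFuture a
  | untl a b => PureFuture a ∧ PureFuture b
  | rel a b => PureFuture a ∧ PureFuture b
  | yest _ => False
  | wyest _ => False
  | since _ _ => False
  | trig _ _ => False

/-- standard LTLf satisfaction over finite words -/
def FinSat (σ : List (Set AP)) : ℕ → LTLF AP → Prop
  | _, tt => True
  | _, ff => False
  | i, atom p => p ∈ σ.getD i ∅
  | i, natom p => p ∉ σ.getD i ∅
  | i, conj a b => FinSat σ i a ∧ FinSat σ i b
  | i, disj a b => FinSat σ i a ∨ FinSat σ i b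
  | i, next a => i + 1 < σ.length ∧ FinSat σ (i+1) a
  | i, wnext a => i + 1 = σ.length ∨ FinSat σ (i+1) a
  | i, untl a b => ∃ j, i ≤ j ∧ j < σ.length ∧ FinSat σ j b ∧ ∀ k, i ≤ k → k < j → FinSat σ k a
  | i, rel a b => (∀ j, i ≤ j → j < σ.length → FinSat σ j b) ∨
      (∃ k, i ≤ k ∧ k < σ.length ∧ FinSat σ k a ∧ ∀ j, i ≤ j → j ≤ k → FinSat σ j b)
  | i, yest a => 0 < i ∧ FinSat σ (i-1) a
  | i, wyest a => i = 0 ∨ FinSat σ (i-1) a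
  | i, since a b => ∃ j, j ≤ i ∧ FinSat σ j b ∧ ∀ k, j < k → k ≤ i → FinSat σ k a
  | i, trig a b => (∀ j, j ≤ i → FinSat σ j b) ∨
      (∃ k, k ≤ i ∧ FinSat σ k a ∧ ∀ j, k ≤ j → j ≤ i → FinSat σ j b)

/-- standard LTL satisfaction over infinite words -/
def InfSat (σ : ℕ → Set AP) : ℕ → LTLF AP → Prop
  | _, tt => True
  | _, ff => False
  | i, atom p => p ∈ σ i
  | i, natom p => p ∉ σ i
  | i, conj a b => InfSat σ i a ∧ InfSat σ i b
  | i, disj a b => InfSat σ i a ∨ InfSat σ i b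
  | i, next a => InfSat σ (i+1) a
  | i, wnext a => InfSat σ (i+1) a
  | i, untl a b => ∃ j, i ≤ j ∧ InfSat σ j b ∧ ∀ k, i ≤ k → k < j → InfSat σ k a
  | i, rel a b => (∀ j, i ≤ j → InfSat σ j b) ∨
      (∃ k, i ≤ k ∧ InfSat σ k a ∧ ∀ j, i ≤ j → j ≤ k → InfSat σ j b)
  | i, yest a => 0 < i ∧ InfSat σ (i-1) a
  | i, wyest a => i = 0 ∨ InfSat σ (i-1) a
  | i, since a b => ∃ j, j ≤ i ∧ InfSat σ j b ∧ ∀ k, j < k → k ≤ i → InfSat σ k a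
  | i, trig a b => (∀ j, j ≤ i → InfSat σ j b) ∨
      (∃ k, k ≤ i ∧ InfSat σ k a ∧ ∀ j, k ≤ j → j ≤ i → InfSat σ j b)

/-- bounded satisfaction relation `⊨_B` over finite words: like `FinSat`,
except `wX ψ` is interpreted as `X ψ` and `ψ₁ R ψ₂` as `ψ₂ U (ψ₁ ∧ ψ₂)` -/
def BSat (σ : List (Set AP)) : ℕ → LTLF AP → Prop
  | _, tt => True
  | _, ff => False
  | i, atom p => p ∈ σ.getD i ∅
  | i, natom p => p ∉ σ.getD i ∅
  | i, conj a b => BSat σ i a ∧ BSat σ i b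
  | i, disj a b => BSat σ i a ∨ BSat σ i b
  | i, next a => i + 1 < σ.length ∧ BSat σ (i+1) a
  | i, wnext a => i + 1 < σ.length ∧ BSat σ (i+1) a
  | i, untl a b => ∃ j, i ≤ j ∧ j < σ.length ∧ BSat σ j b ∧ ∀ k, i ≤ k → k < j → BSat σ k a
  | i, rel a b => ∃ j, i ≤ j ∧ j < σ.length ∧ (BSat σ j a ∧ BSat σ j b) ∧ ∀ k, i ≤ k → k < j → BSat σ k b
  | i, yest a => 0 < i ∧ BSat σ (i-1) a
  | i, wyest a => i = 0 ∨ BSat σ (i-1) a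
  | i, since a b => ∃ j, j ≤ i ∧ BSat σ j b ∧ ∀ k, j < k → k ≤ i → BSat σ k a
  | i, trig a b => (∀ j, j ≤ i → BSat σ j b) ∨
      (∃ k, k ≤ i ∧ BSat σ k a ∧ ∀ j, k ≤ j → j ≤ i → BSat σ j b)

/-- list of all subformulas (including the formula itself) -/
def subformulas : LTLF AP → List (LTLF AP)
  | tt => [tt]
  | ff => [ff]
  | atom p => [atom p]
  | natom p => [natom p]
  | conj a b => conj a b :: (subformulas a ++ subformulas b)
  | disj a b => disj a b :: (subformulas a ++ subformulas b)
  | next a => next a :: subformulas a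
  | wnext a => wnext a :: subformulas a
  | untl a b => untl a b :: (subformulas a ++ subformulas b)
  | rel a b => rel a b :: (subformulas a ++ subformulas b)
  | yest a => yest a :: subformulas a
  | wyest a => wyest a :: subformulas a
  | since a b => since a b :: (subformulas a ++ subformulas b)
  | trig a b => trig a b :: (subformulas a ++ subformulas b)

/-- number of symbols of a formula -/
def size : LTLF AP → ℕ
  | tt => 1
  | ff => 1
  | atom _ => 1
  | natom _ => 1
  | conj a b => size a + size b + 1
  | disj a b => size a + size b + 1
  | next a => size a + 1
  | wnext a => size a + 1
  | untl a b => size a + size b + 1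
  | rel a b => size a + size b + 1
  | yest a => size a + 1
  | wyest a => size a + 1
  | since a b => size a + size b + 1
  | trig a b => size a + size b + 1

end LTLF

/-- concatenation of a finite word with an infinite word -/
def catW {α : Type} (u : List α) (w : ℕ → α) : ℕ → α :=
  fun i => u.getD i (w (i - u.length))

/-- the prefix `σ_[0,i]` (of length `i+1`) of an infinite word -/
def preW {α : Type} (w : ℕ → α) (i : ℕ) : List α := (List.range (i+1)).map w

/-- a language of infinite words is safety -/
def SafetyLang {α : Type} (L : Set (ℕ → α)) : Prop :=
  ∀ σ, σ ∉ L → ∃ i, ∀ σ' : ℕ → α, catW (preW σ i) σ' ∉ L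

/-- a language of infinite words is cosafety -/
def CosafetyLang {α : Type} (L : Set (ℕ → α)) : Prop :=
  ∀ σ, σ ∈ L → ∃ i, ∀ σ' : ℕ → α, catW (preW σ i) σ' ∈ L

namespace LTLF

variable {AP : Type}

/-- the language of infinite words of an LTL formula -/
def Lang (φ : LTLF AP) : Set (ℕ → Set AP) := {σ | InfSat σ 0 φ}

/-- good prefix of a formula over infinite words -/
def GoodPrefix (φ : LTLF AP) (u : List (Set AP)) : Prop :=
  u ≠ [] ∧ ∀ σ' : ℕ → Set AP, InfSat (catW u σ') 0 φ

/-- bad prefix of a formula over infinite words -/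
def BadPrefix (φ : LTLF AP) (u : List (Set AP)) : Prop :=
  u ≠ [] ∧ ∀ σ' : ℕ → Set AP, ¬ InfSat (catW u σ') 0 φ

/-- intentionally cosafe: cosafety and every good prefix is informative -/
def IntentionallyCosafe (φ : LTLF AP) : Prop :=
  CosafetyLang (Lang φ) ∧ ∀ u, GoodPrefix φ u → BSat u 0 φ

/-- intentionally safe: safety and every bad prefix is informative for `¬φ` -/
def IntentionallySafe (φ : LTLF AP) : Prop :=
  SafetyLang (Lang φ) ∧ ∀ u, BadPrefix φ u → BSat u 0 (neg φ)

end LTLF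

open LTLF

lemma catW_lt {α : Type} (u : List α) (w : ℕ → α) (d : α) {i : ℕ}
    (h : i < u.length) : catW u w i = u.getD i d := by
  unfold catW
  rw [List.getD_eq_getElem _ _ h, List.getD_eq_getElem _ _ h]

lemma bsat_infsat {AP : Type} (σ : List (Set AP)) (σ' : ℕ → Set AP)
    (φ : LTLF AP) : ∀ i, i < σ.length → BSat σ i φ → InfSat (catW σ σ') i φ := by
  induction φ with
  | tt => intro i _ _; trivial
  | ff => intro i _ h; exact h.elim
  | atom p =>
    intro i hi h
    simpa [InfSat, BSat, catW_lt σ σ' ∅ hi] using h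
  | natom p =>
    intro i hi h
    simpa [InfSat, BSat, catW_lt σ σ' ∅ hi] using h
  | conj a b iha ihb =>
    intro i hi h; exact ⟨iha i hi h.1, ihb i hi h.2⟩
  | disj a b iha ihb =>
    intro i hi h
    exact h.elim (fun h => Or.inl (iha i hi h)) (fun h => Or.inr (ihb i hi h))
  | next a ih =>
    intro i _ h; exact ih (i+1) h.1 h.2
  | wnext a ih =>
    intro i _ h; exact ih (i+1) h.1 h.2
  | untl a b iha ihb =>
    intro i _ h
    obtain ⟨j, hij, hjl, hb, hk⟩ := h
    exact ⟨j, hij, ihb j hjl hb, fun k hk1 hk2 =>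
      iha k (lt_trans hk2 hjl) (hk k hk1 hk2)⟩
  | rel a b iha ihb =>
    intro i _ h
    obtain ⟨j, hij, hjl, ⟨ha, hb⟩, hk⟩ := h
    refine Or.inr ⟨j, hij, iha j hjl ha, fun k hk1 hk2 => ?_⟩
    rcases lt_or_eq_of_le hk2 with hlt | rfl
    · exact ihb k (lt_trans hlt hjl) (hk k hk1 hlt)
    · exact ihb k hjl hb
  | yest a ih =>
    intro i hi h
    exact ⟨h.1, ih (i-1) (lt_of_le_of_lt (Nat.pred_le i) hi) h.2⟩
  | wyest a ih =>
    intro i hi h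
    exact h.elim Or.inl (fun h =>
      Or.inr (ih (i-1) (lt_of_le_of_lt (Nat.pred_le i) hi) h))
  | since a b iha ihb =>
    intro i hi h
    obtain ⟨j, hji, hb, hk⟩ := h
    exact ⟨j, hji, ihb j (lt_of_le_of_lt hji hi) hb, fun k hk1 hk2 =>
      iha k (lt_of_le_of_lt hk2 hi) (hk k hk1 hk2)⟩
  | trig a b iha ihb =>
    intro i hi h
    rcases h with h | ⟨k, hki, ha, hj⟩
    · exact Or.inl (fun j hji => ihb j (lt_of_le_of_lt hji hi) (h j hji))
    · exact Or.inr ⟨k, hki, iha k (lt_of_le_of_lt hki hi) ha,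
        fun j hj1 hj2 => ihb j (lt_of_le_of_lt hj2 hi) (hj j hj1 hj2)⟩

/-- if a finite nonempty word is an informative model of `φ`
(`σ ⊨_B φ`), then every infinite extension `σ·σ'` satisfies `φ`. -/
theorem stmt0 {AP : Type} (σ : List (Set AP)) (hσ : σ ≠ []) (φ : LTLF AP)
    (h : BSat σ 0 φ) :
    ∀ σ' : ℕ → Set AP, InfSat (catW σ σ') 0 φ := by
  intro σ'
  exact bsat_infsat σ σ' φ 0 (List.length_pos_iff.mpr hσ) h
end

section
/- For every intentionally cosafe LTL formula φ over AP and every finite nonempty word σ over 2^AP: the monitor outputs ⊤ on σ (i.e., every infinite extension of σ satisfies φ) if and only if σ ⊨_B φ. -/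
open LTLF

lemma catW_getD {AP : Type} (σ : List (Set AP)) (σ' : ℕ → Set AP) {i : ℕ}
    (h : i < σ.length) : catW σ σ' i = σ.getD i ∅ := by
  unfold catW
  rw [List.getD_eq_getElem _ _ h, List.getD_eq_getElem _ _ h]

lemma bsat_to_infSat {AP : Type} (σ' : ℕ → Set AP) :
    ∀ (φ : LTLF AP) (σ : List (Set AP)) (i : ℕ), i < σ.length →
      BSat σ i φ → InfSat (catW σ σ') i φ := by
  intro φ
  induction φ with
  | tt => intro σ i _ _; trivial
  | ff => intro σ i _ hb; exact hb.elim
  | atom p => intro σ i hi hb; simpa [InfSat, BSat, catW_getD σ σ' hi] using hb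
  | natom p => intro σ i hi hb; simpa [InfSat, BSat, catW_getD σ σ' hi] using hb
  | conj a b iha ihb =>
      intro σ i hi hb
      exact ⟨iha σ i hi hb.1, ihb σ i hi hb.2⟩
  | disj a b iha ihb =>
      intro σ i hi hb
      exact hb.elim (fun h => Or.inl (iha σ i hi h)) (fun h => Or.inr (ihb σ i hi h))
  | next a iha =>
      intro σ i hi hb
      exact iha σ (i+1) hb.1 hb.2
  | wnext a iha =>
      intro σ i hi hb
      exact iha σ (i+1) hb.1 hb.2
  | untl a b iha ihb =>
      intro σ i hi hb
      obtain ⟨j, hij, hj, hbj, hk⟩ := hb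
      exact ⟨j, hij, ihb σ j hj hbj, fun k hik hkj =>
        iha σ k (lt_trans hkj hj) (hk k hik hkj)⟩
  | rel a b iha ihb =>
      intro σ i hi hb
      obtain ⟨j, hij, hj, ⟨haj, hbj⟩, hk⟩ := hb
      refine Or.inr ⟨j, hij, iha σ j hj haj, fun k hik hkj => ?_⟩
      rcases lt_or_eq_of_le hkj with h | h
      · exact ihb σ k (lt_trans h hj) (hk k hik h)
      · subst h; exact ihb σ k hj hbj
  | yest a iha =>
      intro σ i hi hb
      exact ⟨hb.1, iha σ (i-1) (lt_of_le_of_lt (Nat.sub_le _ _) hi) hb.2⟩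
  | wyest a iha =>
      intro σ i hi hb
      exact hb.elim Or.inl (fun h => Or.inr (iha σ (i-1) (lt_of_le_of_lt (Nat.sub_le _ _) hi) h))
  | since a b iha ihb =>
      intro σ i hi hb
      obtain ⟨j, hji, hbj, hk⟩ := hb
      exact ⟨j, hji, ihb σ j (lt_of_le_of_lt hji hi) hbj,
        fun k hjk hki => iha σ k (lt_of_le_of_lt hki hi) (hk k hjk hki)⟩
  | trig a b iha ihb =>
      intro σ i hi hb
      rcases hb with h | ⟨k, hki, hak, hj⟩
      · exact Or.inl fun j hji => ihb σ j (lt_of_le_of_lt hji hi) (h j hji)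
      · exact Or.inr ⟨k, hki, iha σ k (lt_of_le_of_lt hki hi) hak,
          fun j hkj hji => ihb σ j (lt_of_le_of_lt hji hi) (hj j hkj hji)⟩

/-- for an intentionally cosafe LTL formula, the monitor outputs `⊤`
on a finite nonempty word iff the word is an informative model of the formula. -/
theorem stmt1 {AP : Type} (φ : LTLF AP) (h : IntentionallyCosafe φ)
    (σ : List (Set AP)) (hσ : σ ≠ []) :
    (∀ σ' : ℕ → Set AP, InfSat (catW σ σ') 0 φ) ↔ BSat σ 0 φ := by
  constructor
  · intro hall
    exact h.2 σ ⟨hσ, hall⟩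
  · intro hb σ'
    exact bsat_to_infSat σ' φ σ 0 (List.length_pos_iff.mpr hσ) hb
end

section
/- For every intentionally safe LTL formula φ over AP and every finite nonempty word σ over 2^AP: every infinite extension of σ violates φ if and only if σ ⊨_B ¬φ (where ¬φ denotes the negation normal form of the negation of φ). -/
open LTLF

private lemma getD_congr {α : Type} (l : List α) (i : ℕ) (h : i < l.length) (a b : α) :
    l.getD i a = l.getD i b := by
  simp [List.getD, List.getElem?_eq_getElem h]

private lemma catW_eq {AP : Type} (σ : List (Set AP)) (σ' : ℕ → Set AP) (i : ℕ)
    (h : i < σ.length) : catW σ σ' i = σ.getD i ∅ := by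
  unfold catW; exact getD_congr σ i h _ _

private lemma bsat_to_infsat {AP : Type} (σ : List (Set AP)) (σ' : ℕ → Set AP)
    (ψ : LTLF AP) : ∀ i, i < σ.length → BSat σ i ψ → InfSat (catW σ σ') i ψ := by
  induction ψ with
  | tt => intro i _ _; trivial
  | ff => intro i _ hb; exact hb.elim
  | atom p => intro i hi hb; simpa [InfSat, BSat, catW_eq σ σ' i hi] using hb
  | natom p => intro i hi hb; simpa [InfSat, BSat, catW_eq σ σ' i hi] using hb
  | conj a b iha ihb => intro i hi hb; exact ⟨iha i hi hb.1, ihb i hi hb.2⟩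
  | disj a b iha ihb =>
      intro i hi hb
      exact hb.elim (fun h => Or.inl (iha i hi h)) (fun h => Or.inr (ihb i hi h))
  | next a iha => intro i hi hb; exact iha (i+1) hb.1 hb.2
  | wnext a iha => intro i hi hb; exact iha (i+1) hb.1 hb.2
  | untl a b iha ihb =>
      intro i hi hb
      obtain ⟨j, hij, hjl, hjb, hk⟩ := hb
      exact ⟨j, hij, ihb j hjl hjb, fun k hik hkj =>
        iha k (lt_trans hkj hjl) (hk k hik hkj)⟩
  | rel a b iha ihb =>
      intro i hi hb
      obtain ⟨j, hij, hjl, ⟨hja, hjb⟩, hk⟩ := hb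
      refine Or.inr ⟨j, hij, iha j hjl hja, fun k hik hkj => ?_⟩
      rcases lt_or_eq_of_le hkj with h | h
      · exact ihb k (lt_trans h hjl) (hk k hik h)
      · subst h; exact ihb k hjl hjb
  | yest a iha =>
      intro i hi hb
      exact ⟨hb.1, iha (i-1) (lt_of_le_of_lt (Nat.pred_le i) hi) hb.2⟩
  | wyest a iha =>
      intro i hi hb
      exact hb.elim Or.inl (fun h => Or.inr (iha (i-1) (lt_of_le_of_lt (Nat.pred_le i) hi) h))
  | since a b iha ihb =>
      intro i hi hb
      obtain ⟨j, hji, hjb, hk⟩ := hb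
      exact ⟨j, hji, ihb j (lt_of_le_of_lt hji hi) hjb, fun k hjk hki =>
        iha k (lt_of_le_of_lt hki hi) (hk k hjk hki)⟩
  | trig a b iha ihb =>
      intro i hi hb
      rcases hb with hall | ⟨k, hki, hka, hj⟩
      · exact Or.inl fun j hji => ihb j (lt_of_le_of_lt hji hi) (hall j hji)
      · exact Or.inr ⟨k, hki, iha k (lt_of_le_of_lt hki hi) hka, fun j hkj hji =>
          ihb j (lt_of_le_of_lt hji hi) (hj j hkj hji)⟩

private lemma infsat_neg {AP : Type} (σ : ℕ → Set AP) (ψ : LTLF AP) :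
    ∀ i, InfSat σ i (neg ψ) → ¬ InfSat σ i ψ := by
  induction ψ with
  | tt => intro i h; exact h.elim
  | ff => intro i _ h; exact h
  | atom p => intro i h hs; exact h hs
  | natom p => intro i h hs; exact hs h
  | conj a b iha ihb =>
      intro i h hs
      exact h.elim (fun h1 => iha i h1 hs.1) (fun h2 => ihb i h2 hs.2)
  | disj a b iha ihb =>
      intro i h hs
      exact hs.elim (iha i h.1) (ihb i h.2)
  | next a iha => intro i h hs; exact iha (i+1) h hs
  | wnext a iha => intro i h hs; exact iha (i+1) h hs
  | untl a b iha ihb =>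
      intro i h hs
      obtain ⟨j, hij, hjb, hk⟩ := hs
      rcases h with hall | ⟨k, hik, hka, hj⟩
      · exact ihb j (hall j hij) hjb
      · rcases lt_or_ge k j with hlt | hle
        · exact iha k (hka) (hk k hik hlt)
        · exact ihb j (hj j hij hle) hjb
  | rel a b iha ihb =>
      intro i h hs
      obtain ⟨j, hij, hjb, hk⟩ := h
      rcases hs with hall | ⟨k, hik, hka, hj⟩
      · exact ihb j hjb (hall j hij)
      · rcases lt_or_ge k j with hlt | hle
        · exact iha k (hk k hik hlt) hka
        · exact ihb j hjb (hj j hij hle)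
  | yest a iha =>
      intro i h hs
      rcases h with h0 | hn
      · exact absurd hs.1 (by omega)
      · exact iha (i-1) hn hs.2
  | wyest a iha =>
      intro i h hs
      rcases hs with h0 | hn
      · exact absurd h0 (Nat.pos_iff_ne_zero.mp h.1)
      · exact iha (i-1) h.2 hn
  | since a b iha ihb =>
      intro i h hs
      obtain ⟨j, hji, hjb, hk⟩ := hs
      rcases h with hall | ⟨k, hki, hka, hj⟩
      · exact ihb j (hall j hji) hjb
      · rcases lt_or_ge j k with hlt | hle
        · exact iha k (hka) (hk k hlt hki)
        · exact ihb j (hj j hle hji) hjb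
  | trig a b iha ihb =>
      intro i h hs
      obtain ⟨j, hji, hjb, hk⟩ := h
      rcases hs with hall | ⟨k, hki, hka, hj⟩
      · exact ihb j hjb (hall j hji)
      · rcases lt_or_ge j k with hlt | hle
        · exact iha k (hk k hlt hki) hka
        · exact ihb j hjb (hj j hle hji)

/-- for an intentionally safe LTL formula, every infinite extension
of `σ` violates `φ` iff `σ ⊨_B nnf(¬φ)`. -/
theorem stmt2 {AP : Type} (φ : LTLF AP) (h : IntentionallySafe φ)
    (σ : List (Set AP)) (hσ : σ ≠ []) :
    (∀ σ' : ℕ → Set AP, ¬ InfSat (catW σ σ') 0 φ) ↔ BSat σ 0 (neg φ) := by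
  constructor
  · intro hall
    exact h.2 σ ⟨hσ, hall⟩
  · intro hb σ'
    have hlen : 0 < σ.length := List.length_pos_iff.mpr hσ
    exact infsat_neg _ φ 0 (bsat_to_infsat σ σ' (neg φ) 0 hlen hb)
end

section
/- Let ψ be a pure past LTL formula (containing only past temporal modalities Y, wY, S, T besides Boolean connectives and literals). Under finite-word semantics, the set of good prefixes of the LTLf formula F(ψ) is exactly the set of finite nonempty models of F(ψ); that is, a finite nonempty word σ over 2^AP satisfies σ·σ' ⊨ F(ψ) for all finite words σ' iff σ ⊨ F(ψ). -/
open LTLF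

theorem purePast_ext {AP : Type} (ψ : LTLF AP) (hψ : PurePast ψ) :
    ∀ (σ σ' : List (Set AP)) (i : ℕ), i < σ.length →
      (FinSat (σ ++ σ') i ψ ↔ FinSat σ i ψ) := by
  induction ψ with
  | tt => simp [FinSat]
  | ff => simp [FinSat]
  | atom p => intro σ σ' i hi; simp [FinSat, List.getD, List.getElem?_append_left hi]
  | natom p => intro σ σ' i hi; simp [FinSat, List.getD, List.getElem?_append_left hi]
  | conj a b iha ihb =>
    intro σ σ' i hi
    simp [FinSat, iha hψ.1 σ σ' i hi, ihb hψ.2 σ σ' i hi]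
  | disj a b iha ihb =>
    intro σ σ' i hi
    simp [FinSat, iha hψ.1 σ σ' i hi, ihb hψ.2 σ σ' i hi]
  | next a _ => exact absurd hψ id
  | wnext a _ => exact absurd hψ id
  | untl a b _ _ => exact absurd hψ id
  | rel a b _ _ => exact absurd hψ id
  | yest a iha =>
    intro σ σ' i hi
    simp only [FinSat]
    constructor
    · rintro ⟨h0, h⟩; exact ⟨h0, (iha hψ σ σ' _ (lt_of_le_of_lt (Nat.pred_le i) hi)).mp h⟩
    · rintro ⟨h0, h⟩; exact ⟨h0, (iha hψ σ σ' _ (lt_of_le_of_lt (Nat.pred_le i) hi)).mpr h⟩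
  | wyest a iha =>
    intro σ σ' i hi
    simp only [FinSat]
    have := iha hψ σ σ' (i-1) (lt_of_le_of_lt (Nat.pred_le i) hi)
    tauto
  | since a b iha ihb =>
    intro σ σ' i hi
    simp only [FinSat]
    constructor
    · rintro ⟨j, hj, hb, ha⟩
      exact ⟨j, hj, (ihb hψ.2 σ σ' j (lt_of_le_of_lt hj hi)).mp hb,
        fun k hk1 hk2 => (iha hψ.1 σ σ' k (lt_of_le_of_lt hk2 hi)).mp (ha k hk1 hk2)⟩
    · rintro ⟨j, hj, hb, ha⟩
      exact ⟨j, hj, (ihb hψ.2 σ σ' j (lt_of_le_of_lt hj hi)).mpr hb,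
        fun k hk1 hk2 => (iha hψ.1 σ σ' k (lt_of_le_of_lt hk2 hi)).mpr (ha k hk1 hk2)⟩
  | trig a b iha ihb =>
    intro σ σ' i hi
    simp only [FinSat]
    constructor
    · rintro (h | ⟨k, hk, ha, hb⟩)
      · exact Or.inl fun j hj => (ihb hψ.2 σ σ' j (lt_of_le_of_lt hj hi)).mp (h j hj)
      · exact Or.inr ⟨k, hk, (iha hψ.1 σ σ' k (lt_of_le_of_lt hk hi)).mp ha,
          fun j hj1 hj2 => (ihb hψ.2 σ σ' j (lt_of_le_of_lt hj2 hi)).mp (hb j hj1 hj2)⟩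
    · rintro (h | ⟨k, hk, ha, hb⟩)
      · exact Or.inl fun j hj => (ihb hψ.2 σ σ' j (lt_of_le_of_lt hj hi)).mpr (h j hj)
      · exact Or.inr ⟨k, hk, (iha hψ.1 σ σ' k (lt_of_le_of_lt hk hi)).mpr ha,
          fun j hj1 hj2 => (ihb hψ.2 σ σ' j (lt_of_le_of_lt hj2 hi)).mpr (hb j hj1 hj2)⟩

/-- under finite-word semantics, the good prefixes of `F(ψ)`
(`ψ` pure past) are exactly its finite nonempty models. -/
theorem stmt3 {AP : Type} (ψ : LTLF AP) (hψ : PurePast ψ)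
    (σ : List (Set AP)) (hσ : σ ≠ []) :
    (∀ σ' : List (Set AP), FinSat (σ ++ σ') 0 (F ψ)) ↔ FinSat σ 0 (F ψ) := by
  constructor
  · intro h
    have := h []
    simpa using this
  · rintro h σ'
    obtain ⟨j, hj0, hjl, hb, -⟩ := h
    refine ⟨j, hj0, ?_, ?_, fun k _ _ => trivial⟩
    · simp only [List.length_append]; omega
    · exact (purePast_ext ψ hψ σ σ' j hjl).mpr hb
end

section
/- Every formula of the form F(ψ), where ψ is a pure past LTL formula, interpreted over finite words, is intentionally cosafe: every good prefix of F(ψ) under finite-word semantics is an informative model of F(ψ). -/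
open LTLF

lemma pp_eq {AP : Type} (ψ : LTLF AP) (hψ : PurePast ψ) (σ : List (Set AP)) :
    ∀ i, (FinSat σ i ψ ↔ BSat σ i ψ) := by
  induction ψ with
  | tt => intro i; rfl
  | ff => intro i; rfl
  | atom p => intro i; rfl
  | natom p => intro i; rfl
  | conj a b iha ihb =>
    intro i
    exact and_congr (iha hψ.1 i) (ihb hψ.2 i)
  | disj a b iha ihb =>
    intro i
    exact or_congr (iha hψ.1 i) (ihb hψ.2 i)
  | next a ih => exact absurd hψ id
  | wnext a ih => exact absurd hψ id
  | untl a b _ _ => exact absurd hψ id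
  | rel a b _ _ => exact absurd hψ id
  | yest a ih =>
    intro i
    exact and_congr Iff.rfl (ih hψ (i-1))
  | wyest a ih =>
    intro i
    exact or_congr Iff.rfl (ih hψ (i-1))
  | since a b iha ihb =>
    intro i
    exact exists_congr fun j => and_congr Iff.rfl
      (and_congr (ihb hψ.2 j) (forall_congr' fun k =>
        imp_congr Iff.rfl (imp_congr Iff.rfl (iha hψ.1 k))))
  | trig a b iha ihb =>
    intro i
    exact or_congr
      (forall_congr' fun j => imp_congr Iff.rfl (ihb hψ.2 j))
      (exists_congr fun k => and_congr Iff.rfl (and_congr (iha hψ.1 k)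
        (forall_congr' fun j => imp_congr Iff.rfl (imp_congr Iff.rfl (ihb hψ.2 j)))))

/-- every `F(ψ)` with `ψ` pure past, interpreted over finite words,
is intentionally cosafe: every good prefix is an informative model. -/
theorem stmt4 {AP : Type} (ψ : LTLF AP) (hψ : PurePast ψ)
    (σ : List (Set AP)) (hσ : σ ≠ [])
    (hgood : ∀ σ' : List (Set AP), FinSat (σ ++ σ') 0 (F ψ)) :
    BSat σ 0 (F ψ) := by
  have h := hgood []
  simp only [List.append_nil] at h
  obtain ⟨j, hj0, hjl, hjb, -⟩ := h
  exact ⟨j, hj0, hjl, (pp_eq ψ hψ σ j).1 hjb, fun _ _ _ => trivial⟩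
end

section
/- Every formula of the form G(ψ), where ψ is a pure past LTL formula, interpreted over finite words, is intentionally safe: every bad prefix of G(ψ) under finite-word semantics is an informative model of ¬G(ψ), i.e., of F(¬ψ). -/
open LTLF

open Classical in
lemma negSince (P Q : ℕ → Prop) (i : ℕ) :
    (¬ ∃ j, j ≤ i ∧ Q j ∧ ∀ k, j < k → k ≤ i → P k) ↔
    ((∀ j, j ≤ i → ¬ Q j) ∨ ∃ k, k ≤ i ∧ ¬ P k ∧ ∀ j, k ≤ j → j ≤ i → ¬ Q j) := by
  constructor
  · intro h
    by_cases hq : ∀ j, j ≤ i → ¬ Q j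
    · exact Or.inl hq
    · right
      push_neg at hq
      obtain ⟨j, hj, hQj⟩ := hq
      have hk0 : ∃ k, j < k ∧ k ≤ i ∧ ¬ P k := by
        by_contra hc
        push_neg at hc
        exact h ⟨j, hj, hQj, fun k h1 h2 => hc k h1 h2⟩
      obtain ⟨k0, _, hk0i, hk0P⟩ := hk0
      set K := Nat.findGreatest (fun k => ¬ P k) i with hK
      have hKP : ¬ P K := Nat.findGreatest_spec (P := fun k => ¬ P k) hk0i hk0P
      have hKi : K ≤ i := Nat.findGreatest_le i
      refine ⟨K, hKi, hKP, fun j' hj1 hj2 hQ => ?_⟩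
      have : ∃ k, j' < k ∧ k ≤ i ∧ ¬ P k := by
        by_contra hc
        push_neg at hc
        exact h ⟨j', hj2, hQ, fun k h1 h2 => hc k h1 h2⟩
      obtain ⟨k, hk1, hk2, hk3⟩ := this
      have : k ≤ K := by
        by_contra hlt
        exact Nat.findGreatest_is_greatest (lt_of_not_ge hlt) hk2 hk3
      omega
  · rintro (h | ⟨k, hk, hPk, hQ⟩) ⟨j, hj, hQj, hP⟩
    · exact h j hj hQj
    · have hjk : j < k := by
        by_contra hc
        exact hQ j (not_lt.mp hc) hj hQj
      exact hPk (hP k hjk hk)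

lemma negTrig (P Q : ℕ → Prop) (i : ℕ) :
    (¬ ((∀ j, j ≤ i → Q j) ∨ ∃ k, k ≤ i ∧ P k ∧ ∀ j, k ≤ j → j ≤ i → Q j)) ↔
    (∃ j, j ≤ i ∧ ¬ Q j ∧ ∀ k, j < k → k ≤ i → ¬ P k) := by
  have := negSince (fun k => ¬ P k) (fun k => ¬ Q k) i
  simp only [not_not] at this
  constructor
  · intro h
    by_contra hc
    exact h (this.mp hc)
  · intro h hc
    exact (this.mpr hc) h

lemma key {AP : Type} (ψ : LTLF AP) (hψ : PurePast ψ) (σ : List (Set AP)) :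
    ∀ i, i < σ.length → (BSat σ i (neg ψ) ↔ ¬ FinSat σ i ψ) := by
  induction ψ with
  | tt => intro i hi; simp [neg, BSat, FinSat]
  | ff => intro i hi; simp [neg, BSat, FinSat]
  | atom p => intro i hi; simp [neg, BSat, FinSat]
  | natom p => intro i hi; simp [neg, BSat, FinSat]
  | conj a b iha ihb =>
      intro i hi
      obtain ⟨ha, hb⟩ := hψ
      simp [neg, BSat, FinSat, iha ha i hi, ihb hb i hi]; try tauto
  | disj a b iha ihb =>
      intro i hi
      obtain ⟨ha, hb⟩ := hψ
      simp [neg, BSat, FinSat, iha ha i hi, ihb hb i hi]; try tauto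
  | next a iha => exact absurd hψ (by simp [PurePast])
  | wnext a iha => exact absurd hψ (by simp [PurePast])
  | untl a b iha ihb => exact absurd hψ (by simp [PurePast])
  | rel a b iha ihb => exact absurd hψ (by simp [PurePast])
  | yest a iha =>
      intro i hi
      have ih := iha hψ
      show (i = 0 ∨ BSat σ (i-1) (neg a)) ↔ ¬ (0 < i ∧ FinSat σ (i-1) a)
      rcases Nat.eq_zero_or_pos i with h0 | h0
      · simp [h0]
      · have : i - 1 < σ.length := by omega
        rw [ih (i-1) this]
        constructor
        · rintro (h | h) ⟨h1, h2⟩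
          · omega
          · exact h h2
        · intro h; by_cases hf : FinSat σ (i-1) a
          · exact absurd ⟨h0, hf⟩ h
          · exact Or.inr hf
  | wyest a iha =>
      intro i hi
      have ih := iha hψ
      show (0 < i ∧ BSat σ (i-1) (neg a)) ↔ ¬ (i = 0 ∨ FinSat σ (i-1) a)
      rcases Nat.eq_zero_or_pos i with h0 | h0
      · simp [h0]
      · have : i - 1 < σ.length := by omega
        rw [ih (i-1) this]
        constructor
        · rintro ⟨_, h⟩ (h1 | h2) <;> [omega; exact h h2]
        · intro h; exact ⟨h0, fun hf => h (Or.inr hf)⟩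
  | since a b iha ihb =>
      intro i hi
      obtain ⟨ha, hb⟩ := hψ
      show ((∀ j, j ≤ i → BSat σ j (neg b)) ∨
          ∃ k, k ≤ i ∧ BSat σ k (neg a) ∧ ∀ j, k ≤ j → j ≤ i → BSat σ j (neg b)) ↔
        ¬ (∃ j, j ≤ i ∧ FinSat σ j b ∧ ∀ k, j < k → k ≤ i → FinSat σ k a)
      rw [negSince (fun k => FinSat σ k a) (fun k => FinSat σ k b) i]
      constructor
      · rintro (h | ⟨k, hk, hka, hkb⟩)
        · exact Or.inl fun j hj => (ihb hb j (by omega)).mp (h j hj)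
        · exact Or.inr ⟨k, hk, (iha ha k (by omega)).mp hka,
            fun j h1 h2 => (ihb hb j (by omega)).mp (hkb j h1 h2)⟩
      · rintro (h | ⟨k, hk, hka, hkb⟩)
        · exact Or.inl fun j hj => (ihb hb j (by omega)).mpr (h j hj)
        · exact Or.inr ⟨k, hk, (iha ha k (by omega)).mpr hka,
            fun j h1 h2 => (ihb hb j (by omega)).mpr (hkb j h1 h2)⟩
  | trig a b iha ihb =>
      intro i hi
      obtain ⟨ha, hb⟩ := hψ
      show (∃ j, j ≤ i ∧ BSat σ j (neg b) ∧ ∀ k, j < k → k ≤ i → BSat σ k (neg a)) ↔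
        ¬ ((∀ j, j ≤ i → FinSat σ j b) ∨
          ∃ k, k ≤ i ∧ FinSat σ k a ∧ ∀ j, k ≤ j → j ≤ i → FinSat σ j b)
      rw [negTrig (fun k => FinSat σ k a) (fun k => FinSat σ k b) i]
      constructor
      · rintro ⟨j, hj, hjb, hja⟩
        exact ⟨j, hj, fun h => ((ihb hb j (by omega)).mp hjb) h,
          fun k h1 h2 hf => ((iha ha k (by omega)).mp (hja k h1 h2)) hf⟩
      · rintro ⟨j, hj, hjb, hja⟩
        exact ⟨j, hj, (ihb hb j (by omega)).mpr hjb,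
          fun k h1 h2 => (iha ha k (by omega)).mpr (hja k h1 h2)⟩

lemma purePastPrefix {AP : Type} (ψ : LTLF AP) (hψ : PurePast ψ)
    (σ σ' : List (Set AP)) : ∀ i, i < σ.length →
    (FinSat (σ ++ σ') i ψ ↔ FinSat σ i ψ) := by
  induction ψ with
  | tt => intro i hi; simp [FinSat]
  | ff => intro i hi; simp [FinSat]
  | atom p =>
      intro i hi
      show p ∈ (σ ++ σ').getD i ∅ ↔ p ∈ σ.getD i ∅
      rw [List.getD_eq_getElem?_getD, List.getD_eq_getElem?_getD,
        List.getElem?_append_left hi]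
  | natom p =>
      intro i hi
      show p ∉ (σ ++ σ').getD i ∅ ↔ p ∉ σ.getD i ∅
      rw [List.getD_eq_getElem?_getD, List.getD_eq_getElem?_getD,
        List.getElem?_append_left hi]
  | conj a b iha ihb =>
      intro i hi
      obtain ⟨ha, hb⟩ := hψ
      simp [FinSat, iha ha i hi, ihb hb i hi]
  | disj a b iha ihb =>
      intro i hi
      obtain ⟨ha, hb⟩ := hψ
      simp [FinSat, iha ha i hi, ihb hb i hi]
  | next a iha => exact absurd hψ (by simp [PurePast])
  | wnext a iha => exact absurd hψ (by simp [PurePast])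
  | untl a b iha ihb => exact absurd hψ (by simp [PurePast])
  | rel a b iha ihb => exact absurd hψ (by simp [PurePast])
  | yest a iha =>
      intro i hi
      show (0 < i ∧ FinSat (σ++σ') (i-1) a) ↔ (0 < i ∧ FinSat σ (i-1) a)
      rcases Nat.eq_zero_or_pos i with h0 | h0
      · simp [h0]
      · rw [iha hψ (i-1) (by omega)]
  | wyest a iha =>
      intro i hi
      show (i = 0 ∨ FinSat (σ++σ') (i-1) a) ↔ (i = 0 ∨ FinSat σ (i-1) a)
      rcases Nat.eq_zero_or_pos i with h0 | h0
      · simp [h0]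
      · rw [iha hψ (i-1) (by omega)]
  | since a b iha ihb =>
      intro i hi
      obtain ⟨ha, hb⟩ := hψ
      show (∃ j, j ≤ i ∧ FinSat (σ++σ') j b ∧ ∀ k, j < k → k ≤ i → FinSat (σ++σ') k a) ↔
        (∃ j, j ≤ i ∧ FinSat σ j b ∧ ∀ k, j < k → k ≤ i → FinSat σ k a)
      constructor
      · rintro ⟨j, hj, hjb, hja⟩
        exact ⟨j, hj, (ihb hb j (by omega)).mp hjb,
          fun k h1 h2 => (iha ha k (by omega)).mp (hja k h1 h2)⟩
      · rintro ⟨j, hj, hjb, hja⟩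
        exact ⟨j, hj, (ihb hb j (by omega)).mpr hjb,
          fun k h1 h2 => (iha ha k (by omega)).mpr (hja k h1 h2)⟩
  | trig a b iha ihb =>
      intro i hi
      obtain ⟨ha, hb⟩ := hψ
      show ((∀ j, j ≤ i → FinSat (σ++σ') j b) ∨
          ∃ k, k ≤ i ∧ FinSat (σ++σ') k a ∧ ∀ j, k ≤ j → j ≤ i → FinSat (σ++σ') j b) ↔
        ((∀ j, j ≤ i → FinSat σ j b) ∨
          ∃ k, k ≤ i ∧ FinSat σ k a ∧ ∀ j, k ≤ j → j ≤ i → FinSat σ j b)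
      constructor
      · rintro (h | ⟨k, hk, hka, hkb⟩)
        · exact Or.inl fun j hj => (ihb hb j (by omega)).mp (h j hj)
        · exact Or.inr ⟨k, hk, (iha ha k (by omega)).mp hka,
            fun j h1 h2 => (ihb hb j (by omega)).mp (hkb j h1 h2)⟩
      · rintro (h | ⟨k, hk, hka, hkb⟩)
        · exact Or.inl fun j hj => (ihb hb j (by omega)).mpr (h j hj)
        · exact Or.inr ⟨k, hk, (iha ha k (by omega)).mpr hka,
            fun j h1 h2 => (ihb hb j (by omega)).mpr (hkb j h1 h2)⟩


/-- every `G(ψ)` with `ψ` pure past, interpreted over finite words,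
is intentionally safe: every bad prefix of `G(ψ)` is an informative model
of `¬G(ψ)`, i.e. of `F(nnf(¬ψ))`. -/
theorem stmt5 {AP : Type} (ψ : LTLF AP) (hψ : PurePast ψ)
    (σ : List (Set AP)) (hσ : σ ≠ [])
    (hbad : ∀ σ' : List (Set AP), ¬ FinSat (σ ++ σ') 0 (G ψ)) :
    BSat σ 0 (F (neg ψ)) := by
  have h := hbad []
  simp only [List.append_nil] at h
  -- h : ¬ FinSat σ 0 (G ψ)
  have hex : ∃ j, j < σ.length ∧ ¬ FinSat σ j ψ := by
    by_contra hc
    push_neg at hc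
    exact h (Or.inl fun j _ hj => hc j hj)
  obtain ⟨j, hj, hjψ⟩ := hex
  exact ⟨j, Nat.zero_le j, hj, (key ψ hψ σ j hj).mpr hjψ, fun k _ _ => trivial⟩
end

section
/- The finite word ⟨{p}⟩ (a single letter containing p) is a good prefix of the LTL formula F(p ∧ (X q ∨ X ¬q)) over infinite words, but it is not an informative model of that formula; hence F(p ∧ (X q ∨ X ¬q)) is not intentionally cosafe. -/
open LTLF

/-- the word `⟨{p}⟩` is a good prefix of `F(p ∧ (X q ∨ X ¬q))`
over infinite words, but not an informative model of it; hence that formula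
is not intentionally cosafe. Here `AP = Fin 2`, `p = 0`, `q = 1`. -/
theorem stmt14 :
    let φ : LTLF (Fin 2) :=
      F (conj (atom 0) (disj (next (atom 1)) (next (natom 1))))
    let σ : List (Set (Fin 2)) := [{0}]
    (∀ σ' : ℕ → Set (Fin 2), InfSat (catW σ σ') 0 φ) ∧
    ¬ BSat σ 0 φ ∧
    ¬ IntentionallyCosafe φ := by
  intro φ σ
  have hgood : ∀ σ' : ℕ → Set (Fin 2), InfSat (catW σ σ') 0 φ := by
    intro σ'
    refine ⟨0, le_refl 0, ?_, fun k _ hk => absurd hk (Nat.not_lt_zero k)⟩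
    constructor
    · show (0 : Fin 2) ∈ catW σ σ' 0
      simp [catW, σ]
    · by_cases h : (1 : Fin 2) ∈ catW σ σ' 1
      · exact Or.inl h
      · exact Or.inr h
  have hnb : ¬ BSat σ 0 φ := by
    rintro ⟨j, _, hj, ⟨_, hd⟩, _⟩
    have hj0 : j = 0 := Nat.lt_one_iff.mp hj
    subst hj0
    rcases hd with ⟨h1, _⟩ | ⟨h1, _⟩ <;> exact absurd h1 (by norm_num [σ])
  refine ⟨hgood, hnb, ?_⟩
  rintro ⟨_, hinf⟩
  exact hnb (hinf σ ⟨by simp [σ], hgood⟩)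
end

section
/- The finite word ⟨{p}⟩ is a good prefix of the LTL formula F(Y p) over infinite words, but it is not an informative model of F(Y p); hence F(Y p) is not intentionally cosafe, showing that not all F(pLTL) formulas over infinite words are intentionally cosafe. -/
open LTLF

/-- the word `⟨{p}⟩` is a good prefix of `F(Y p)` over infinite
words, but not an informative model of it; hence `F(Y p)` is not intentionally
cosafe, so not all `F(pLTL)` formulas over infinite words are intentionally
cosafe. Here `AP = Unit`. -/
theorem stmt15 :
    let φ : LTLF Unit := F (yest (atom ()))
    let σ : List (Set Unit) := [Set.univ]
    (∀ σ' : ℕ → Set Unit, InfSat (catW σ σ') 0 φ) ∧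
    ¬ BSat σ 0 φ ∧
    ¬ IntentionallyCosafe φ := by
  intro φ σ
  have hgood : ∀ σ' : ℕ → Set Unit, InfSat (catW σ σ') 0 φ := by
    intro σ'
    refine ⟨1, by omega, ⟨by omega, ?_⟩, fun k _ _ => trivial⟩
    show () ∈ catW σ σ' 0
    simp [catW, σ]
  have hnb : ¬ BSat σ 0 φ := by
    rintro ⟨j, hj0, hjlen, ⟨hjpos, _⟩, _⟩
    simp [σ] at hjlen
    omega
  refine ⟨hgood, hnb, fun ⟨_, h⟩ => hnb (h σ ⟨by simp [σ], hgood⟩)⟩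
end

section
/- Let ψ be a pure past LTL formula and A_inf a DFA recognizing exactly the finite-word models of F(ψ). Define A_gp from A_inf by additionally marking as final every state q such that for every infinite word σ ∈ Σ^ω there exists i ≥ 0 with the run of A_inf from q on the first i symbols of σ ending in a final state of A_inf. Then A_gp accepts a finite nonempty word σ if and only if σ is a good prefix of F(ψ) under infinite-word semantics. -/
open LTLF

/-- the marking construction: a state is final in `A_gp` iff it is final in
`A_inf` or every infinite word eventually drives `A_inf` from it into a final
state. -/
def markedAccept {AP Q : Type} (A : DFA (Set AP) Q) : Set Q :=
  A.accept ∪ {q | ∀ w : ℕ → Set AP, ∃ i,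
    A.evalFrom q ((List.range i).map w) ∈ A.accept}

lemma purepast_fin_iff_inf {AP : Type} {ψ : LTLF AP} (hψ : PurePast ψ)
    (u : List (Set AP)) (σ' : ℕ → Set AP) :
    ∀ i, i < u.length → (FinSat u i ψ ↔ InfSat (catW u σ') i ψ) := by
  induction ψ with
  | tt => intro i _; simp [FinSat, InfSat]
  | ff => intro i _; simp [FinSat, InfSat]
  | atom p =>
    intro i h
    simp only [FinSat, InfSat, catW, List.getD_eq_getElem _ _ h]
  | natom p =>
    intro i h
    simp only [FinSat, InfSat, catW, List.getD_eq_getElem _ _ h]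
  | conj a b iha ihb =>
    intro i h
    obtain ⟨ha, hb⟩ := hψ
    simp only [FinSat, InfSat, iha ha i h, ihb hb i h]
  | disj a b iha ihb =>
    intro i h
    obtain ⟨ha, hb⟩ := hψ
    simp only [FinSat, InfSat, iha ha i h, ihb hb i h]
  | next a _ => exact absurd hψ (by simp [PurePast])
  | wnext a _ => exact absurd hψ (by simp [PurePast])
  | untl a b _ _ => exact absurd hψ (by simp [PurePast])
  | rel a b _ _ => exact absurd hψ (by simp [PurePast])
  | yest a iha =>
    intro i h
    simp only [FinSat, InfSat, iha hψ (i-1) (by omega)]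
  | wyest a iha =>
    intro i h
    simp only [FinSat, InfSat, iha hψ (i-1) (by omega)]
  | since a b iha ihb =>
    intro i h
    obtain ⟨ha, hb⟩ := hψ
    simp only [FinSat, InfSat]
    constructor
    · rintro ⟨j, hji, hjb, hk⟩
      exact ⟨j, hji, (ihb hb j (by omega)).1 hjb,
        fun k hk1 hk2 => (iha ha k (by omega)).1 (hk k hk1 hk2)⟩
    · rintro ⟨j, hji, hjb, hk⟩
      exact ⟨j, hji, (ihb hb j (by omega)).2 hjb,
        fun k hk1 hk2 => (iha ha k (by omega)).2 (hk k hk1 hk2)⟩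
  | trig a b iha ihb =>
    intro i h
    obtain ⟨ha, hb⟩ := hψ
    simp only [FinSat, InfSat]
    constructor
    · rintro (hall | ⟨k, hki, hka, hj⟩)
      · exact Or.inl fun j hj => (ihb hb j (by omega)).1 (hall j hj)
      · exact Or.inr ⟨k, hki, (iha ha k (by omega)).1 hka,
          fun j hj1 hj2 => (ihb hb j (by omega)).1 (hj j hj1 hj2)⟩
    · rintro (hall | ⟨k, hki, hka, hj⟩)
      · exact Or.inl fun j hj => (ihb hb j (by omega)).2 (hall j hj)
      · exact Or.inr ⟨k, hki, (iha ha k (by omega)).2 hka,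
          fun j hj1 hj2 => (ihb hb j (by omega)).2 (hj j hj1 hj2)⟩

lemma finSat_F_iff {AP : Type} (ψ : LTLF AP) (u : List (Set AP)) :
    FinSat u 0 (F ψ) ↔ ∃ j, j < u.length ∧ FinSat u j ψ := by
  simp [F, FinSat]

lemma infSat_F_iff {AP : Type} (ψ : LTLF AP) (σ : ℕ → Set AP) :
    InfSat σ 0 (F ψ) ↔ ∃ j, InfSat σ j ψ := by
  simp [F, InfSat]

lemma catW_append_prefix {α : Type} (u : List α) (w : ℕ → α) (i : ℕ) :
    catW (u ++ (List.range i).map w) (fun n => w (n + i)) = catW u w := by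
  funext k
  unfold catW
  rcases lt_or_ge k u.length with h | h
  · rw [List.getD_eq_getElem _ _ (by simp; omega), List.getD_eq_getElem _ _ h,
      List.getElem_append_left h]
  · rcases lt_or_ge k (u.length + i) with h2 | h2
    · rw [List.getD_eq_getElem _ _ (by simp; omega),
        List.getD_eq_default _ _ h, List.getElem_append_right h]
      simp
    · rw [List.getD_eq_default _ _ (by simp; omega),
        List.getD_eq_default _ _ h, List.length_append, List.length_map,
        List.length_range]
      show w (k - (u.length + i) + i) = w (k - u.length)
      congr 1
      omega

/-- if `A_inf` recognizes exactly the finite nonempty models of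
`F(ψ)` (`ψ` pure past), then the marked automaton `A_gp` accepts a finite
nonempty word iff it is a good prefix of `F(ψ)` over infinite words. -/
theorem stmt17 {AP Q : Type} [Fintype Q] (ψ : LTLF AP) (hψ : PurePast ψ)
    (A : DFA (Set AP) Q)
    (hA : ∀ u : List (Set AP), u ∈ A.accepts ↔ (u ≠ [] ∧ FinSat u 0 (F ψ))) :
    ∀ u : List (Set AP), u ≠ [] →
      (u ∈ (DFA.mk A.step A.start (markedAccept A)).accepts ↔
        GoodPrefix (F ψ) u) := by
  intro u hu
  rw [DFA.mem_accepts]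
  have heval : (DFA.mk A.step A.start (markedAccept A)).eval u = A.eval u := rfl
  rw [heval]
  constructor
  · rintro (hacc | hall)
    · -- u itself is accepted by A
      have := (hA u).1 (by rwa [DFA.mem_accepts])
      obtain ⟨-, hfin⟩ := this
      obtain ⟨j, hj, hjψ⟩ := (finSat_F_iff ψ u).1 hfin
      refine ⟨hu, fun σ' => ?_⟩
      rw [infSat_F_iff]
      exact ⟨j, (purepast_fin_iff_inf hψ u σ' j hj).1 hjψ⟩
    · refine ⟨hu, fun σ' => ?_⟩
      obtain ⟨i, hi⟩ := hall σ'
      have hv : (u ++ (List.range i).map σ') ∈ A.accepts := by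
        rw [DFA.mem_accepts, DFA.eval, DFA.evalFrom_of_append]
        exact hi
      obtain ⟨-, hfin⟩ := (hA _).1 hv
      obtain ⟨j, hj, hjψ⟩ := (finSat_F_iff ψ _).1 hfin
      rw [infSat_F_iff]
      refine ⟨j, ?_⟩
      have := (purepast_fin_iff_inf hψ (u ++ (List.range i).map σ')
        (fun n => σ' (n + i)) j hj).1 hjψ
      rwa [catW_append_prefix] at this
  · rintro ⟨-, hgood⟩
    right
    intro w
    obtain ⟨j, hj⟩ := (infSat_F_iff ψ _).1 (hgood w)
    refine ⟨j + 1, ?_⟩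
    have hlen : j < (u ++ (List.range (j+1)).map w).length := by simp; omega
    have hfin : FinSat (u ++ (List.range (j+1)).map w) j ψ := by
      refine (purepast_fin_iff_inf hψ _ (fun n => w (n + (j+1))) j hlen).2 ?_
      rwa [catW_append_prefix]
    have : (u ++ (List.range (j+1)).map w) ∈ A.accepts := by
      rw [hA]
      exact ⟨by simp [hu], (finSat_F_iff ψ _).2 ⟨j, hlen, hfin⟩⟩
    rw [DFA.mem_accepts, DFA.eval, DFA.evalFrom_of_append] at this
    exact this
end

section
/- Let ψ be a pure past LTL formula, A_inf a DFA recognizing the finite-word models of F(ψ), and A_gp the DFA obtained by marking as final every state from which all infinite words eventually drive A_inf into a final state. Then F(ψ) (over infinite words) is intentionally cosafe if and only if L(A_gp) ⊆ L(A_inf). -/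
open LTLF

section Aux

variable {AP : Type}

lemma getD_map_range {α : Type} (f : ℕ → α) {n k : ℕ} (h : k < n) (d : α) :
    ((List.range n).map f).getD k d = f k := by
  rw [List.getD_eq_getElem _ _ (by simpa using h)]
  simp

/-- pure past satisfaction transfers between finite and infinite words
agreeing up to the current position -/
lemma pp_fin_inf : ∀ {ψ : LTLF AP}, PurePast ψ →
    ∀ (j : ℕ) (w : List (Set AP)) (σ : ℕ → Set AP),
      (∀ k, k ≤ j → σ k = w.getD k ∅) → (FinSat w j ψ ↔ InfSat σ j ψ) := by
  intro ψ
  induction ψ with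
  | tt => intro _ j w σ _; simp [FinSat, InfSat]
  | ff => intro _ j w σ _; simp [FinSat, InfSat]
  | atom p => intro _ j w σ ha; simp [FinSat, InfSat, ha j le_rfl]
  | natom p => intro _ j w σ ha; simp [FinSat, InfSat, ha j le_rfl]
  | conj a b iha ihb =>
      intro h j w σ ha
      simp only [FinSat, InfSat]
      exact and_congr (iha h.1 j w σ ha) (ihb h.2 j w σ ha)
  | disj a b iha ihb =>
      intro h j w σ ha
      simp only [FinSat, InfSat]
      exact or_congr (iha h.1 j w σ ha) (ihb h.2 j w σ ha)
  | next a _ => intro h; exact (h : False).elim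
  | wnext a _ => intro h; exact (h : False).elim
  | untl a b _ _ => intro h; exact (h : False).elim
  | rel a b _ _ => intro h; exact (h : False).elim
  | yest a iha =>
      intro h j w σ ha
      simp only [FinSat, InfSat]
      exact and_congr Iff.rfl
        (iha h (j-1) w σ (fun k hk => ha k (hk.trans (Nat.sub_le j 1))))
  | wyest a iha =>
      intro h j w σ ha
      simp only [FinSat, InfSat]
      exact or_congr Iff.rfl
        (iha h (j-1) w σ (fun k hk => ha k (hk.trans (Nat.sub_le j 1))))
  | since a b iha ihb =>
      intro h j w σ ha
      simp only [FinSat, InfSat]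
      constructor
      · rintro ⟨j', hj', hb, hall⟩
        exact ⟨j', hj',
          (ihb h.2 j' w σ (fun k hk => ha k (hk.trans hj'))).mp hb,
          fun k hk1 hk2 =>
            (iha h.1 k w σ (fun m hm => ha m (hm.trans hk2))).mp (hall k hk1 hk2)⟩
      · rintro ⟨j', hj', hb, hall⟩
        exact ⟨j', hj',
          (ihb h.2 j' w σ (fun k hk => ha k (hk.trans hj'))).mpr hb,
          fun k hk1 hk2 =>
            (iha h.1 k w σ (fun m hm => ha m (hm.trans hk2))).mpr (hall k hk1 hk2)⟩
  | trig a b iha ihb =>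
      intro h j w σ ha
      simp only [FinSat, InfSat]
      constructor
      · rintro (hall | ⟨k, hk, hsa, hall⟩)
        · exact Or.inl fun j' hj' =>
            (ihb h.2 j' w σ (fun m hm => ha m (hm.trans hj'))).mp (hall j' hj')
        · exact Or.inr ⟨k, hk,
            (iha h.1 k w σ (fun m hm => ha m (hm.trans hk))).mp hsa,
            fun j' hj1 hj2 =>
              (ihb h.2 j' w σ (fun m hm => ha m (hm.trans hj2))).mp (hall j' hj1 hj2)⟩
      · rintro (hall | ⟨k, hk, hsa, hall⟩)
        · exact Or.inl fun j' hj' =>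
            (ihb h.2 j' w σ (fun m hm => ha m (hm.trans hj'))).mpr (hall j' hj')
        · exact Or.inr ⟨k, hk,
            (iha h.1 k w σ (fun m hm => ha m (hm.trans hk))).mpr hsa,
            fun j' hj1 hj2 =>
              (ihb h.2 j' w σ (fun m hm => ha m (hm.trans hj2))).mpr (hall j' hj1 hj2)⟩

/-- pure past satisfaction only depends on the prefix up to the current position -/
lemma pp_agree {ψ : LTLF AP} (h : PurePast ψ) {j : ℕ} {σ σ' : ℕ → Set AP}
    (ha : ∀ k, k ≤ j → σ k = σ' k) : InfSat σ j ψ ↔ InfSat σ' j ψ := by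
  have hw : ∀ k, k ≤ j → σ' k = ((List.range (j+1)).map σ').getD k ∅ :=
    fun k hk => (getD_map_range σ' (by omega) ∅).symm
  rw [← pp_fin_inf h j _ σ' hw, pp_fin_inf h j _ σ (fun k hk => (ha k hk).trans (hw k hk))]

/-- for pure past formulas, bounded satisfaction coincides with `FinSat` -/
lemma pp_bsat : ∀ {ψ : LTLF AP}, PurePast ψ →
    ∀ (w : List (Set AP)) (j : ℕ), BSat w j ψ ↔ FinSat w j ψ := by
  intro ψ
  induction ψ with
  | tt => intro _ w j; simp [BSat, FinSat]
  | ff => intro _ w j; simp [BSat, FinSat]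
  | atom p => intro _ w j; simp [BSat, FinSat]
  | natom p => intro _ w j; simp [BSat, FinSat]
  | conj a b iha ihb => intro h w j; simp only [BSat, FinSat, iha h.1, ihb h.2]
  | disj a b iha ihb => intro h w j; simp only [BSat, FinSat, iha h.1, ihb h.2]
  | next a _ => intro h; exact (h : False).elim
  | wnext a _ => intro h; exact (h : False).elim
  | untl a b _ _ => intro h; exact (h : False).elim
  | rel a b _ _ => intro h; exact (h : False).elim
  | yest a iha => intro h w j; simp only [BSat, FinSat, iha h]
  | wyest a iha => intro h w j; simp only [BSat, FinSat, iha h]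
  | since a b iha ihb => intro h w j; simp only [BSat, FinSat, iha h.1, ihb h.2]
  | trig a b iha ihb => intro h w j; simp only [BSat, FinSat, iha h.1, ihb h.2]

lemma finSat_F {ψ : LTLF AP} (w : List (Set AP)) :
    FinSat w 0 (F ψ) ↔ ∃ j, j < w.length ∧ FinSat w j ψ := by
  simp [F, FinSat]

lemma infSat_F {ψ : LTLF AP} (σ : ℕ → Set AP) :
    InfSat σ 0 (F ψ) ↔ ∃ j, InfSat σ j ψ := by
  simp [F, InfSat]

lemma bSat_F {ψ : LTLF AP} (h : PurePast ψ) (w : List (Set AP)) :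
    BSat w 0 (F ψ) ↔ FinSat w 0 (F ψ) := by
  simp [F, BSat, FinSat, pp_bsat h]

/-- `catW u w` agrees with `u ++ (range i).map w` on positions `< |u| + i` -/
lemma catW_range_agree (u : List (Set AP)) (w : ℕ → Set AP) (i : ℕ) {k : ℕ}
    (hk : k < u.length + i) :
    catW u w k = (u ++ (List.range i).map w).getD k ∅ := by
  unfold catW
  by_cases h : k < u.length
  · rw [List.getD_append _ _ _ _ h, List.getD_eq_getElem _ _ h, List.getD_eq_getElem _ _ h]
  · push_neg at h
    rw [List.getD_append_right _ _ _ _ h, List.getD_eq_default _ _ h,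
      getD_map_range w (by omega) ∅]

lemma catW_preW (σ σ' : ℕ → Set AP) (i : ℕ) {k : ℕ} (hk : k ≤ i) :
    catW (preW σ i) σ' k = σ k := by
  unfold catW preW
  exact getD_map_range σ (by omega) _

end Aux

/-- if `A_inf` recognizes exactly the finite nonempty models of
`F(ψ)` (`ψ` pure past), then `F(ψ)` over infinite words is intentionally
cosafe iff the language of the marked automaton `A_gp` (on nonempty words) is
included in the language of `A_inf`. -/
theorem stmt18 {AP Q : Type} [Fintype Q] (ψ : LTLF AP) (hψ : PurePast ψ)
    (A : DFA (Set AP) Q)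
    (hA : ∀ u : List (Set AP), u ∈ A.accepts ↔ (u ≠ [] ∧ FinSat u 0 (F ψ))) :
    IntentionallyCosafe (F ψ) ↔
      ∀ u : List (Set AP), u ≠ [] →
        u ∈ (DFA.mk A.step A.start (markedAccept A)).accepts →
        u ∈ A.accepts := by
  constructor
  · rintro ⟨-, hinf⟩ u hu hgp
    rw [DFA.mem_accepts] at hgp ⊢
    have hgp' : A.eval u ∈ markedAccept A := hgp
    simp only [markedAccept, Set.mem_union, Set.mem_setOf_eq] at hgp'
    rcases hgp' with hacc | hall
    · exact hacc
    · have good : GoodPrefix (F ψ) u := by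
        refine ⟨hu, fun σ' => ?_⟩
        obtain ⟨i, hi⟩ := hall σ'
        have hmem : u ++ (List.range i).map σ' ∈ A.accepts := by
          rw [DFA.mem_accepts, DFA.eval, DFA.evalFrom_of_append]
          exact hi
        obtain ⟨-, hfin⟩ := (hA _).mp hmem
        obtain ⟨j, hj, hjψ⟩ := (finSat_F _).mp hfin
        simp only [List.length_append, List.length_map, List.length_range] at hj
        rw [pp_fin_inf hψ j (u ++ (List.range i).map σ') (catW u σ')
          (fun k hk => catW_range_agree u σ' i (by omega))] at hjψ
        exact (infSat_F _).mpr ⟨j, hjψ⟩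
      have hb := hinf u good
      rw [bSat_F hψ] at hb
      exact (hA u).mpr ⟨hu, hb⟩
  · intro hincl
    constructor
    · intro σ hσ
      obtain ⟨j, hj⟩ := (infSat_F σ).mp hσ
      refine ⟨j, fun σ' => ?_⟩
      show InfSat (catW (preW σ j) σ') 0 (F ψ)
      exact (infSat_F _).mpr
        ⟨j, (pp_agree hψ (fun k hk => catW_preW σ σ' j hk)).mpr hj⟩
    · rintro u ⟨hne, hgood⟩
      have hmem : u ∈ (DFA.mk A.step A.start (markedAccept A)).accepts := by
        rw [DFA.mem_accepts]
        have hset : A.eval u ∈ {q | ∀ w : ℕ → Set AP, ∃ i,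
            A.evalFrom q ((List.range i).map w) ∈ A.accept} := by
          intro w
          obtain ⟨j, hj⟩ := (infSat_F _).mp (hgood w)
          refine ⟨j + 1, ?_⟩
          have hlen : j < (u ++ (List.range (j+1)).map w).length := by
            simp only [List.length_append, List.length_map, List.length_range]
            omega
          have hfin : FinSat (u ++ (List.range (j+1)).map w) j ψ :=
            (pp_fin_inf hψ j _ (catW u w)
              (fun k hk => catW_range_agree u w (j+1) (by omega))).mpr hj
          have hmem2 : u ++ (List.range (j+1)).map w ∈ A.accepts :=
            (hA _).mpr ⟨by intro h; exact hne (List.append_eq_nil_iff.mp h).1,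
              (finSat_F _).mpr ⟨j, hlen, hfin⟩⟩
          rw [DFA.mem_accepts, DFA.eval, DFA.evalFrom_of_append] at hmem2
          exact hmem2
        exact Set.mem_union_right _ hset
      have hacc := hincl u hne hmem
      rw [bSat_F hψ]
      exact ((hA u).mp hacc).2
end

section
/- For every LTL formula φ (pure future fragment) and finite nonempty word σ over 2^AP: σ is a KV-informative model for φ (i.e., there exists a labeling function L : {0,…,n} → 2^{closure(nnf(¬φ))} satisfying the Kupferman–Vardi closure conditions with nnf(¬φ) ∈ L(0) and L(n) = ∅) if and only if σ ⊨_B nnf(¬φ). -/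
open LTLF

/-- the closure of a formula: its subformulas together with their NNF negations. -/
def closureSet {AP : Type} (χ : LTLF AP) : Set (LTLF AP) :=
  {ψ | ψ ∈ subformulas χ} ∪ {ψ | ∃ ψ' ∈ subformulas χ, ψ = neg ψ'}

/-- the Kupferman–Vardi local labeling conditions at position `i`. -/
def KVcond {AP : Type} (σ : List (Set AP)) (L : ℕ → Set (LTLF AP)) (i : ℕ) :
    LTLF AP → Prop
  | LTLF.tt => True
  | LTLF.ff => False
  | LTLF.atom p => p ∈ σ.getD i ∅
  | LTLF.natom p => p ∉ σ.getD i ∅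
  | LTLF.conj a b => a ∈ L i ∧ b ∈ L i
  | LTLF.disj a b => a ∈ L i ∨ b ∈ L i
  | LTLF.next a => a ∈ L (i+1)
  | LTLF.wnext a => a ∈ L (i+1)
  | LTLF.untl a b => b ∈ L i ∨ (a ∈ L i ∧ LTLF.untl a b ∈ L (i+1))
  | LTLF.rel a b => b ∈ L i ∧ (a ∈ L i ∨ LTLF.rel a b ∈ L (i+1))
  | LTLF.yest _ => True
  | LTLF.wyest _ => True
  | LTLF.since _ _ => True
  | LTLF.trig _ _ => True

/-- `σ` is a KV-informative model for `φ`. -/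
def KVInformative {AP : Type} (σ : List (Set AP)) (φ : LTLF AP) : Prop :=
  ∃ L : ℕ → Set (LTLF AP),
    (∀ i, L i ⊆ closureSet (neg φ)) ∧
    neg φ ∈ L 0 ∧
    L σ.length = ∅ ∧
    ∀ i, i < σ.length → ∀ ψ ∈ L i, KVcond σ L i ψ

section Aux
variable {AP : Type}

lemma pureFuture_neg : ∀ ψ : LTLF AP, PureFuture ψ → PureFuture (neg ψ) := by
  intro ψ
  induction ψ <;> simp_all [PureFuture, neg]

lemma self_mem_subformulas (ψ : LTLF AP) : ψ ∈ subformulas ψ := by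
  cases ψ <;> simp [subformulas]

lemma subformulas_trans : ∀ χ ψ : LTLF AP, ψ ∈ subformulas χ →
    ∀ τ ∈ subformulas ψ, τ ∈ subformulas χ := by
  intro χ
  induction χ with
  | tt => intro ψ h; simp [subformulas] at h; subst h; intro τ h; exact h
  | ff => intro ψ h; simp [subformulas] at h; subst h; intro τ h; exact h
  | atom p => intro ψ h; simp [subformulas] at h; subst h; intro τ h; exact h
  | natom p => intro ψ h; simp [subformulas] at h; subst h; intro τ h; exact h
  | conj a b iha ihb =>
      intro ψ h τ hτ
      simp only [subformulas, List.mem_cons, List.mem_append] at h ⊢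
      rcases h with rfl | h | h
      · simpa [subformulas] using hτ
      · exact Or.inr (Or.inl (iha ψ h τ hτ))
      · exact Or.inr (Or.inr (ihb ψ h τ hτ))
  | disj a b iha ihb =>
      intro ψ h τ hτ
      simp only [subformulas, List.mem_cons, List.mem_append] at h ⊢
      rcases h with rfl | h | h
      · simpa [subformulas] using hτ
      · exact Or.inr (Or.inl (iha ψ h τ hτ))
      · exact Or.inr (Or.inr (ihb ψ h τ hτ))
  | next a iha =>
      intro ψ h τ hτ
      simp only [subformulas, List.mem_cons] at h ⊢
      rcases h with rfl | h
      · simpa [subformulas] using hτ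
      · exact Or.inr (iha ψ h τ hτ)
  | wnext a iha =>
      intro ψ h τ hτ
      simp only [subformulas, List.mem_cons] at h ⊢
      rcases h with rfl | h
      · simpa [subformulas] using hτ
      · exact Or.inr (iha ψ h τ hτ)
  | untl a b iha ihb =>
      intro ψ h τ hτ
      simp only [subformulas, List.mem_cons, List.mem_append] at h ⊢
      rcases h with rfl | h | h
      · simpa [subformulas] using hτ
      · exact Or.inr (Or.inl (iha ψ h τ hτ))
      · exact Or.inr (Or.inr (ihb ψ h τ hτ))
  | rel a b iha ihb =>
      intro ψ h τ hτ
      simp only [subformulas, List.mem_cons, List.mem_append] at h ⊢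
      rcases h with rfl | h | h
      · simpa [subformulas] using hτ
      · exact Or.inr (Or.inl (iha ψ h τ hτ))
      · exact Or.inr (Or.inr (ihb ψ h τ hτ))
  | yest a iha =>
      intro ψ h τ hτ
      simp only [subformulas, List.mem_cons] at h ⊢
      rcases h with rfl | h
      · simpa [subformulas] using hτ
      · exact Or.inr (iha ψ h τ hτ)
  | wyest a iha =>
      intro ψ h τ hτ
      simp only [subformulas, List.mem_cons] at h ⊢
      rcases h with rfl | h
      · simpa [subformulas] using hτ
      · exact Or.inr (iha ψ h τ hτ)
  | since a b iha ihb =>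
      intro ψ h τ hτ
      simp only [subformulas, List.mem_cons, List.mem_append] at h ⊢
      rcases h with rfl | h | h
      · simpa [subformulas] using hτ
      · exact Or.inr (Or.inl (iha ψ h τ hτ))
      · exact Or.inr (Or.inr (ihb ψ h τ hτ))
  | trig a b iha ihb =>
      intro ψ h τ hτ
      simp only [subformulas, List.mem_cons, List.mem_append] at h ⊢
      rcases h with rfl | h | h
      · simpa [subformulas] using hτ
      · exact Or.inr (Or.inl (iha ψ h τ hτ))
      · exact Or.inr (Or.inr (ihb ψ h τ hτ))

lemma subformulas_neg : ∀ ψ : LTLF AP, subformulas (neg ψ) = (subformulas ψ).map neg := by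
  intro ψ; induction ψ <;> simp [subformulas, neg, *]

lemma mem_closure_sub {χ ψ τ : LTLF AP} (h : ψ ∈ closureSet χ) (ht : τ ∈ subformulas ψ) :
    τ ∈ closureSet χ := by
  rcases h with h | ⟨ψ', hψ', rfl⟩
  · exact Or.inl (subformulas_trans χ ψ h τ ht)
  · rw [subformulas_neg] at ht
    rcases List.mem_map.mp ht with ⟨τ', hτ', rfl⟩
    exact Or.inr ⟨τ', subformulas_trans χ ψ' hψ' τ' hτ', rfl⟩

lemma pureFuture_subformulas : ∀ χ : LTLF AP, PureFuture χ →
    ∀ ψ ∈ subformulas χ, PureFuture ψ := by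
  intro χ
  induction χ with
  | tt => intro hχ ψ h; simp [subformulas] at h; subst h; exact hχ
  | ff => intro hχ ψ h; simp [subformulas] at h; subst h; exact hχ
  | atom p => intro hχ ψ h; simp [subformulas] at h; subst h; exact hχ
  | natom p => intro hχ ψ h; simp [subformulas] at h; subst h; exact hχ
  | conj a b iha ihb =>
      intro hχ ψ h
      simp only [subformulas, List.mem_cons, List.mem_append] at h
      rcases h with rfl | h | h
      · exact hχ
      · exact iha hχ.1 ψ h
      · exact ihb hχ.2 ψ h
  | disj a b iha ihb =>
      intro hχ ψ h
      simp only [subformulas, List.mem_cons, List.mem_append] at h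
      rcases h with rfl | h | h
      · exact hχ
      · exact iha hχ.1 ψ h
      · exact ihb hχ.2 ψ h
  | next a iha =>
      intro hχ ψ h
      simp only [subformulas, List.mem_cons] at h
      rcases h with rfl | h
      · exact hχ
      · exact iha hχ ψ h
  | wnext a iha =>
      intro hχ ψ h
      simp only [subformulas, List.mem_cons] at h
      rcases h with rfl | h
      · exact hχ
      · exact iha hχ ψ h
  | untl a b iha ihb =>
      intro hχ ψ h
      simp only [subformulas, List.mem_cons, List.mem_append] at h
      rcases h with rfl | h | h
      · exact hχ
      · exact iha hχ.1 ψ h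
      · exact ihb hχ.2 ψ h
  | rel a b iha ihb =>
      intro hχ ψ h
      simp only [subformulas, List.mem_cons, List.mem_append] at h
      rcases h with rfl | h | h
      · exact hχ
      · exact iha hχ.1 ψ h
      · exact ihb hχ.2 ψ h
  | yest a iha => intro hχ; exact absurd hχ not_false
  | wyest a iha => intro hχ; exact absurd hχ not_false
  | since a b _ _ => intro hχ; exact absurd hχ not_false
  | trig a b _ _ => intro hχ; exact absurd hχ not_false

lemma pureFuture_closure {χ : LTLF AP} (h : PureFuture χ) :
    ∀ ψ ∈ closureSet χ, PureFuture ψ := by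
  rintro ψ (hψ | ⟨ψ', hψ', rfl⟩)
  · exact pureFuture_subformulas χ h ψ hψ
  · exact pureFuture_neg _ (pureFuture_subformulas χ h ψ' hψ')

lemma KV_key {AP : Type} (σ : List (Set AP)) (L : ℕ → Set (LTLF AP))
    (hn : L σ.length = ∅)
    (hC : ∀ i, i < σ.length → ∀ ψ ∈ L i, KVcond σ L i ψ) :
    ∀ ψ : LTLF AP, PureFuture ψ → ∀ i, i < σ.length → ψ ∈ L i → BSat σ i ψ := by
  intro ψ
  induction ψ with
  | tt => intro _ i _ _; trivial
  | ff => intro _ i hi hm; exact absurd (hC i hi _ hm) (by simp [KVcond])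
  | atom p => intro _ i hi hm; exact hC i hi _ hm
  | natom p => intro _ i hi hm; exact hC i hi _ hm
  | conj a b iha ihb =>
      intro hpf i hi hm
      have hc := hC i hi _ hm
      exact ⟨iha hpf.1 i hi hc.1, ihb hpf.2 i hi hc.2⟩
  | disj a b iha ihb =>
      intro hpf i hi hm
      have hc := hC i hi _ hm
      rcases hc with hc | hc
      · exact Or.inl (iha hpf.1 i hi hc)
      · exact Or.inr (ihb hpf.2 i hi hc)
  | next a iha =>
      intro hpf i hi hm
      have hc' := hC i hi _ hm
      have hc : a ∈ L (i+1) := hc'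
      have hi1 : i + 1 < σ.length := by
        rcases Nat.lt_or_ge (i+1) σ.length with h | h
        · exact h
        · have : i + 1 = σ.length := by omega
          rw [this, hn] at hc; exact absurd hc (Set.notMem_empty _)
      exact ⟨hi1, iha hpf (i+1) hi1 hc⟩
  | wnext a iha =>
      intro hpf i hi hm
      have hc' := hC i hi _ hm
      have hc : a ∈ L (i+1) := hc'
      have hi1 : i + 1 < σ.length := by
        rcases Nat.lt_or_ge (i+1) σ.length with h | h
        · exact h
        · have : i + 1 = σ.length := by omega
          rw [this, hn] at hc; exact absurd hc (Set.notMem_empty _)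
      exact ⟨hi1, iha hpf (i+1) hi1 hc⟩
  | untl a b iha ihb =>
      intro hpf
      suffices h : ∀ d i, σ.length - i ≤ d → i < σ.length → untl a b ∈ L i →
          BSat σ i (untl a b) from fun i hi hm => h _ i le_rfl hi hm
      intro d
      induction d with
      | zero => intro i h1 h2 _; omega
      | succ d ih =>
          intro i hle hi hm
          have hc := hC i hi _ hm
          rcases hc with hcb | ⟨hca, hnext⟩
          · exact ⟨i, le_rfl, hi, ihb hpf.2 i hi hcb, fun k h1 h2 => by omega⟩
          · have hi1 : i + 1 < σ.length := by
              rcases Nat.lt_or_ge (i+1) σ.length with h | h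
              · exact h
              · have : i + 1 = σ.length := by omega
                rw [this, hn] at hnext; exact absurd hnext (Set.notMem_empty _)
            obtain ⟨j, hj1, hj2, hj3, hj4⟩ := ih (i+1) (by omega) hi1 hnext
            refine ⟨j, by omega, hj2, hj3, fun k hk1 hk2 => ?_⟩
            rcases Nat.eq_or_lt_of_le hk1 with h | hk
            · exact h ▸ iha hpf.1 i hi hca
            · exact hj4 k hk hk2
  | rel a b iha ihb =>
      intro hpf
      suffices h : ∀ d i, σ.length - i ≤ d → i < σ.length → rel a b ∈ L i →
          BSat σ i (rel a b) from fun i hi hm => h _ i le_rfl hi hm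
      intro d
      induction d with
      | zero => intro i h1 h2 _; omega
      | succ d ih =>
          intro i hle hi hm
          have hc := hC i hi _ hm
          obtain ⟨hcb, hrest⟩ := hc
          rcases hrest with hca | hnext
          · exact ⟨i, le_rfl, hi, ⟨iha hpf.1 i hi hca, ihb hpf.2 i hi hcb⟩,
              fun k h1 h2 => by omega⟩
          · have hi1 : i + 1 < σ.length := by
              rcases Nat.lt_or_ge (i+1) σ.length with h | h
              · exact h
              · have : i + 1 = σ.length := by omega
                rw [this, hn] at hnext; exact absurd hnext (Set.notMem_empty _)
            obtain ⟨j, hj1, hj2, hj3, hj4⟩ := ih (i+1) (by omega) hi1 hnext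
            refine ⟨j, by omega, hj2, hj3, fun k hk1 hk2 => ?_⟩
            rcases Nat.eq_or_lt_of_le hk1 with h | hk
            · exact h ▸ ihb hpf.2 i hi hcb
            · exact hj4 k hk hk2
  | yest a _ => intro hpf; exact absurd hpf not_false
  | wyest a _ => intro hpf; exact absurd hpf not_false
  | since a b _ _ => intro hpf; exact absurd hpf not_false
  | trig a b _ _ => intro hpf; exact absurd hpf not_false

end Aux

/-- for pure future `φ` and finite nonempty `σ`, `σ` is a
KV-informative model for `φ` iff `σ ⊨_B nnf(¬φ)`. -/
theorem stmt19 {AP : Type} (φ : LTLF AP) (hφ : PureFuture φ)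
    (σ : List (Set AP)) (hσ : σ ≠ []) :
    KVInformative σ φ ↔ BSat σ 0 (neg φ) := by
  have hlen : 0 < σ.length := List.length_pos_iff.mpr hσ
  constructor
  · rintro ⟨L, _, h0, hn, hC⟩
    exact KV_key σ L hn hC (neg φ) (pureFuture_neg φ hφ) 0 hlen h0
  · intro hB
    refine ⟨fun i => {ψ | ψ ∈ closureSet (neg φ) ∧ i < σ.length ∧ BSat σ i ψ},
      fun i ψ hψ => hψ.1, ⟨Or.inl (self_mem_subformulas _), hlen, hB⟩,
      by ext ψ; simp, ?_⟩
    rintro i hi ψ ⟨hcl, -, hb⟩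
    cases ψ with
    | tt => trivial
    | ff => exact hb
    | atom p => exact hb
    | natom p => exact hb
    | conj a b =>
        have ha : a ∈ closureSet (neg φ) := mem_closure_sub hcl
          (by simp only [subformulas, List.mem_cons, List.mem_append]
              exact Or.inr (Or.inl (self_mem_subformulas a)))
        have hbcl : b ∈ closureSet (neg φ) := mem_closure_sub hcl
          (by simp only [subformulas, List.mem_cons, List.mem_append]
              exact Or.inr (Or.inr (self_mem_subformulas b)))
        exact ⟨⟨ha, hi, hb.1⟩, ⟨hbcl, hi, hb.2⟩⟩
    | disj a b =>
        rcases hb with h | h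
        · exact Or.inl ⟨mem_closure_sub hcl
            (by simp only [subformulas, List.mem_cons, List.mem_append]
                exact Or.inr (Or.inl (self_mem_subformulas a))), hi, h⟩
        · exact Or.inr ⟨mem_closure_sub hcl
            (by simp only [subformulas, List.mem_cons, List.mem_append]
                exact Or.inr (Or.inr (self_mem_subformulas b))), hi, h⟩
    | next a =>
        obtain ⟨h1, h2⟩ := hb
        exact ⟨mem_closure_sub hcl
          (by simp only [subformulas, List.mem_cons]
              exact Or.inr (self_mem_subformulas a)), h1, h2⟩
    | wnext a =>
        obtain ⟨h1, h2⟩ := hb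
        exact ⟨mem_closure_sub hcl
          (by simp only [subformulas, List.mem_cons]
              exact Or.inr (self_mem_subformulas a)), h1, h2⟩
    | untl a b =>
        have ha : a ∈ closureSet (neg φ) := mem_closure_sub hcl
          (by simp only [subformulas, List.mem_cons, List.mem_append]
              exact Or.inr (Or.inl (self_mem_subformulas a)))
        have hbcl : b ∈ closureSet (neg φ) := mem_closure_sub hcl
          (by simp only [subformulas, List.mem_cons, List.mem_append]
              exact Or.inr (Or.inr (self_mem_subformulas b)))
        obtain ⟨j, hij, hj, hbj, hall⟩ := hb
        rcases Nat.eq_or_lt_of_le hij with h | h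
        · exact Or.inl ⟨hbcl, hi, by rw [h]; exact hbj⟩
        · refine Or.inr ⟨⟨ha, hi, hall i le_rfl h⟩, ⟨hcl, by omega, ?_⟩⟩
          exact ⟨j, by omega, hj, hbj, fun k hk1 hk2 => hall k (by omega) hk2⟩
    | rel a b =>
        have ha : a ∈ closureSet (neg φ) := mem_closure_sub hcl
          (by simp only [subformulas, List.mem_cons, List.mem_append]
              exact Or.inr (Or.inl (self_mem_subformulas a)))
        have hbcl : b ∈ closureSet (neg φ) := mem_closure_sub hcl
          (by simp only [subformulas, List.mem_cons, List.mem_append]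
              exact Or.inr (Or.inr (self_mem_subformulas b)))
        obtain ⟨j, hij, hj, ⟨hja, hjb⟩, hall⟩ := hb
        rcases Nat.eq_or_lt_of_le hij with h | h
        · exact ⟨⟨hbcl, hi, by rw [h]; exact hjb⟩,
            Or.inl ⟨ha, hi, by rw [h]; exact hja⟩⟩
        · refine ⟨⟨hbcl, hi, hall i le_rfl h⟩, Or.inr ⟨hcl, by omega, ?_⟩⟩
          exact ⟨j, by omega, hj, ⟨hja, hjb⟩, fun k hk1 hk2 => hall k (by omega) hk2⟩
    | yest a => trivial
    | wyest a => trivial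
    | since a b => trivial
    | trig a b => trivial
end
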